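/- Let S be a noetherian ring graded by a finitely generated abelian group D, generated as an S_0-algebra by homogeneous elements g_1,…,g_n of degrees d_1,…,d_n. Call a degree d ∈ D generic if for every representation d = Σ n_i d_i with n_i ∈ ℕ, the set {d_i : n_i ≥ k} generates a finite-index subgroup of D (for a fixed k ≥ 1). If p ⊆ S_0 is a prime ideal such that S_+^k ⊆ pS_+ (where S_+ is the ideal generated by relevant elements), then pS_d = S_d for every generic degree d, and consequently (S_d)_p = 0. -/

import Mathlib

/-- A homogeneous element `f` of a `D`-graded ring is *relevant* if some power `f^n`
(`n ≥ 1`) factors into homogeneous elements whose degrees generate a finite-index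
subgroup of `D`. -/
def Relevant {D A : Type*} [AddCommGroup D] [CommRing A]
    (𝒜 : D → AddSubgroup A) (f : A) : Prop :=
  (∃ d, f ∈ 𝒜 d) ∧
    ∃ n : ℕ, 1 ≤ n ∧ ∃ (ℓ : ℕ) (g : Fin ℓ → A) (e : Fin ℓ → D),
      (∀ i, g i ∈ 𝒜 (e i)) ∧ f ^ n = ∏ i, g i ∧
      (AddSubgroup.closure (Set.range e)).FiniteIndex

/-!
Every element of `S` is an `S₀`-linear combination of monomials `∏ gᵢ ^ mᵢ`. If such a monomial has
generic degree `d`, then `∏_{mᵢ ≥ k} gᵢ` is relevant and its `k`-th power divides the monomial, which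
therefore lies in `S₊ ^ k ⊆ p S₊ ⊆ p S`. Projecting onto degree `d` turns `p S` into `p • S_d`, so
`S_d = p • S_d`. As `S` is noetherian, `S_d` is a finitely generated `S₀`-module, and Nakayama's
lemma yields `s ∉ p` with `s • S_d = 0`.
-/

theorem Submodule.exists_notMem_and_smul_eq_zero_of_fg_of_le_smul {R M : Type*} [CommRing R]
    [AddCommGroup M] [Module R M] {I : Ideal R} (hI : I ≠ ⊤) {N : Submodule R M} (hN : N.FG)
    (hle : N ≤ I • N) : ∃ r ∉ I, ∀ x ∈ N, r • x = 0 := by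
  obtain ⟨r, hr, hrN⟩ := exists_sub_one_mem_and_smul_eq_zero_of_fg_of_le_smul I N hN hle
  refine ⟨r, fun hrI => hI ((Ideal.eq_top_iff_one I).2 ?_), hrN⟩
  simpa using I.sub_mem hrI hr

theorem Submodule.span_range_prod_pow_eq_top {S ι : Type*} [CommRing S] [Fintype ι]
    {R : Subring S} {g : ι → S} (hgen : Subring.closure ((R : Set S) ∪ Set.range g) = ⊤) :
    Submodule.span R (Set.range fun m : ι → ℕ => ∏ i, g i ^ m i) = ⊤ := by
  have hadjoin : Algebra.adjoin R (Set.range g) = ⊤ := by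
    apply Subalgebra.toSubring_injective
    rw [Algebra.adjoin_eq_ring_closure, Algebra.top_toSubring, ← hgen]
    congr
    exact Subtype.range_coe
  rw [← Algebra.toSubmodule_eq_top.2 hadjoin, Algebra.adjoin_eq_span]
  congr 1
  ext x
  simp only [SetLike.mem_coe, Submonoid.mem_closure_range_iff, Set.mem_range]
  constructor
  · rintro ⟨m, rfl⟩
    exact ⟨Finsupp.equivFunOnFinite.symm m, by rw [Finsupp.prod_fintype _ _ (by simp)]; simp⟩
  · rintro ⟨a, rfl⟩
    exact ⟨a, (Finsupp.prod_fintype _ _ (by simp)).symm⟩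

namespace GradedRing

open DirectSum

section AddCommMonoid

variable {ι S : Type*} [AddCommMonoid ι] [DecidableEq ι] [CommRing S]
  (𝒜 : ι → AddSubgroup S) [GradedRing 𝒜]

local notation "𝒜₀" => SetLike.GradeZero.subring 𝒜

def gradeSubmodule (i : ι) : Submodule 𝒜₀ S where
  carrier := 𝒜 i
  add_mem' := add_mem
  zero_mem' := zero_mem _
  smul_mem' r x hx := by simpa [Subring.smul_def] using SetLike.mul_mem_graded r.2 hx

def projLinear (i : ι) : S →ₗ[𝒜₀] S where
  toFun x := decompose 𝒜 x i
  map_add' := by simp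
  map_smul' r x := coe_decompose_mul_of_left_mem_zero 𝒜 r.2

variable {𝒜}

theorem projLinear_apply_of_mem {i : ι} {x : S} (hx : x ∈ 𝒜 i) : projLinear 𝒜 i x = x :=
  decompose_of_mem_same 𝒜 hx

theorem projLinear_apply_of_mem_ne {i j : ι} {x : S} (hx : x ∈ 𝒜 i) (hij : i ≠ j) :
    projLinear 𝒜 j x = 0 :=
  decompose_of_mem_ne 𝒜 hx hij

theorem map_projLinear_le (i : ι) (N : Submodule 𝒜₀ S) :
    N.map (projLinear 𝒜 i) ≤ gradeSubmodule 𝒜 i := by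
  rintro _ ⟨x, -, rfl⟩
  exact SetLike.coe_mem _

theorem mem_smul_gradeSubmodule_of_mem_map (I : Ideal 𝒜₀) {i : ι} {x : S}
    (hx : x ∈ I.map (𝒜₀).subtype) (hxi : x ∈ 𝒜 i) : x ∈ I • gradeSubmodule 𝒜 i := by
  have hx' : x ∈ I • (⊤ : Submodule 𝒜₀ S) := by
    rw [Ideal.smul_top_eq_map]
    exact hx
  have := Submodule.mem_map_of_mem (f := projLinear 𝒜 i) hx'
  rw [Submodule.map_smul'', projLinear_apply_of_mem hxi] at this
  exact Submodule.smul_mono le_rfl (map_projLinear_le i ⊤) this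

theorem mem_closure_of_mem_smul_gradeSubmodule (I : Ideal 𝒜₀) {i : ι} {x : S}
    (hx : x ∈ I • gradeSubmodule 𝒜 i) :
    x ∈ AddSubmonoid.closure {y : S | ∃ a : 𝒜₀, a ∈ I ∧ ∃ x' ∈ 𝒜 i, y = ↑a * x'} := by
  refine Submodule.smul_induction_on hx (fun a ha x' hx' => ?_) fun _ _ => add_mem
  exact AddSubmonoid.subset_closure ⟨a, ha, x', hx', rfl⟩

end AddCommMonoid

section AddCancelCommMonoid

variable {ι S : Type*} [AddCancelCommMonoid ι] [DecidableEq ι] [CommRing S]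
  {𝒜 : ι → AddSubgroup S} [GradedRing 𝒜]

local notation "𝒜₀" => SetLike.GradeZero.subring 𝒜

/-- Generators of the ideal `S · S_i` chosen inside `S_i` generate `S_i` over `S₀`: take the
degree-`i` part of an `S`-linear combination of them. -/
theorem fg_gradeSubmodule [IsNoetherianRing S] (i : ι) : (gradeSubmodule 𝒜 i).FG := by
  obtain ⟨G, hGi, hG⟩ := (Submodule.fg_span_iff_fg_span_finset_subset _).1
    (IsNoetherian.noetherian (Ideal.span (𝒜 i : Set S)))
  refine ⟨G, le_antisymm (Submodule.span_le.2 hGi) fun x hx => ?_⟩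
  have hxG : x ∈ Submodule.span S (G : Set S) := hG ▸ Submodule.subset_span hx
  obtain ⟨c, -, rfl⟩ := Submodule.mem_span_finset.1 hxG
  rw [← projLinear_apply_of_mem hx, map_sum]
  refine Submodule.sum_mem _ fun j hj => ?_
  have hproj : projLinear 𝒜 i (c j • j) = (decompose 𝒜 (c j) 0 : 𝒜₀) • j := by
    have := coe_decompose_mul_add_of_right_mem 𝒜 (i := 0) (a := c j) (hGi hj)
    rwa [zero_add] at this
  rw [hproj]
  exact Submodule.smul_mem _ _ (Submodule.subset_span hj)

end AddCancelCommMonoid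

section Relevant

variable {D S : Type*} [AddCommGroup D] [DecidableEq D] [CommRing S]
  {𝒜 : D → AddSubgroup S} [GradedRing 𝒜]

local notation "𝒜₀" => SetLike.GradeZero.subring 𝒜

theorem relevant_prod {ι : Type*} [Fintype ι] {g : ι → S} {e : ι → D}
    (hg : ∀ i, g i ∈ 𝒜 (e i)) (he : (AddSubgroup.closure (Set.range e)).FiniteIndex) :
    Relevant 𝒜 (∏ i, g i) := by
  let σ := (Fintype.equivFin ι).symm
  refine ⟨⟨∑ i, e i, SetLike.prod_mem_graded 𝒜 e g fun i _ => hg i⟩, 1, le_rfl,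
    Fintype.card ι, g ∘ σ, e ∘ σ, fun _ => hg _, ?_, ?_⟩
  · rw [pow_one]
    exact (σ.prod_comp g).symm
  · rwa [EquivLike.range_comp]

theorem prod_pow_mem_span_relevant_pow {ι : Type*} [Fintype ι] {g : ι → S} {e : ι → D}
    (hg : ∀ i, g i ∈ 𝒜 (e i)) {k : ℕ} (m : ι → ℕ)
    (hm : (AddSubgroup.closure {d : D | ∃ i, k ≤ m i ∧ d = e i}).FiniteIndex) :
    ∏ i, g i ^ m i ∈ Ideal.span {f : S | Relevant 𝒜 f} ^ k := by
  classical
  have hrel : Relevant 𝒜 (∏ i : {i // k ≤ m i}, g i) := by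
    refine relevant_prod (fun i => hg i) ?_
    convert hm using 3
    ext d
    simp [eq_comm]
  have hrel_mem : ∏ i : {i // k ≤ m i}, g i ∈ Ideal.span {f : S | Relevant 𝒜 f} :=
    Ideal.subset_span hrel
  refine Ideal.mem_of_dvd _ ?_ (Ideal.pow_mem_pow hrel_mem k)
  calc (∏ i : {i // k ≤ m i}, g i) ^ k
      = ∏ i ∈ Finset.univ.filter (k ≤ m ·), g i ^ k := by
        rw [Finset.prod_pow, Finset.prod_subtype (p := (k ≤ m ·)) _ (fun i => by simp) g]
    _ ∣ ∏ i ∈ Finset.univ.filter (k ≤ m ·), g i ^ m i :=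
        Finset.prod_dvd_prod_of_dvd _ _ fun i hi => pow_dvd_pow _ (Finset.mem_filter.1 hi).2
    _ ∣ ∏ i, g i ^ m i := Finset.prod_dvd_prod_of_subset _ _ _ (Finset.filter_subset _ _)

theorem gradeSubmodule_le_smul_of_generic {ι : Type*} [Fintype ι] {g : ι → S} {e : ι → D}
    (hg : ∀ i, g i ∈ 𝒜 (e i)) (hgen : Subring.closure ((𝒜 0 : Set S) ∪ Set.range g) = ⊤)
    {k : ℕ} {p : Ideal 𝒜₀}
    (hpk : Ideal.span {f : S | Relevant 𝒜 f} ^ k ≤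
      p.map (𝒜₀).subtype * Ideal.span {f : S | Relevant 𝒜 f})
    {d : D} (hd : ∀ m : ι → ℕ, d = ∑ i, m i • e i →
      (AddSubgroup.closure {d' : D | ∃ i, k ≤ m i ∧ d' = e i}).FiniteIndex) :
    gradeSubmodule 𝒜 d ≤ p • gradeSubmodule 𝒜 d := by
  intro x hx
  rw [← projLinear_apply_of_mem hx]
  have htop : Submodule.span 𝒜₀ (Set.range fun m : ι → ℕ => ∏ i, g i ^ m i) = ⊤ :=
    Submodule.span_range_prod_pow_eq_top hgen
  suffices Submodule.span 𝒜₀ (Set.range fun m : ι → ℕ => ∏ i, g i ^ m i) ≤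
      (p • gradeSubmodule 𝒜 d).comap (projLinear 𝒜 d) from
    this (htop ▸ Submodule.mem_top)
  rw [Submodule.span_le]
  rintro _ ⟨m, rfl⟩
  have hmono : ∏ i, g i ^ m i ∈ 𝒜 (∑ i, m i • e i) :=
    SetLike.prod_pow_mem_graded 𝒜 e g m fun i _ => hg i
  by_cases hm : ∑ i, m i • e i = d
  · subst hm
    rw [SetLike.mem_coe, Submodule.mem_comap, projLinear_apply_of_mem hmono]
    refine mem_smul_gradeSubmodule_of_mem_map p ?_ hmono
    exact Ideal.mul_le_left (hpk (prod_pow_mem_span_relevant_pow hg m (hd m rfl)))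
  · rw [SetLike.mem_coe, Submodule.mem_comap, projLinear_apply_of_mem_ne hmono hm]
    exact zero_mem _

end Relevant

end GradedRing

theorem stmt_17 {D S : Type*} [AddCommGroup D] [DecidableEq D]
    [CommRing S] (𝒜 : D → AddSubgroup S) [GradedRing 𝒜] [IsNoetherianRing S]
    (n : ℕ) (g : Fin n → S) (dg : Fin n → D) (hg : ∀ i, g i ∈ 𝒜 (dg i))
    (hgen : Subring.closure ((𝒜 0 : Set S) ∪ Set.range g) = ⊤)
    (k : ℕ)
    (p : Ideal (SetLike.GradeZero.subring 𝒜)) (hp : p.IsPrime)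
    (hpk : Ideal.span {f : S | Relevant 𝒜 f} ^ k ≤
      Ideal.map (SetLike.GradeZero.subring 𝒜).subtype p *
        Ideal.span {f : S | Relevant 𝒜 f})
    (d : D)
    (hd : ∀ m : Fin n → ℕ, d = ∑ i, m i • dg i →
      (AddSubgroup.closure {e : D | ∃ i, k ≤ m i ∧ e = dg i}).FiniteIndex) :
    (∀ x ∈ 𝒜 d, x ∈ AddSubmonoid.closure
        {y : S | ∃ a : SetLike.GradeZero.subring 𝒜, a ∈ p ∧ ∃ x' ∈ 𝒜 d, y = ↑a * x'})
    ∧ (∀ x ∈ 𝒜 d, ∃ s : SetLike.GradeZero.subring 𝒜, s ∉ p ∧ (s : S) * x = 0) := by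
  have hle := GradedRing.gradeSubmodule_le_smul_of_generic hg hgen hpk hd
  refine ⟨fun x hx => GradedRing.mem_closure_of_mem_smul_gradeSubmodule p (hle hx), ?_⟩
  obtain ⟨s, hsp, hs⟩ := Submodule.exists_notMem_and_smul_eq_zero_of_fg_of_le_smul hp.ne_top
    (GradedRing.fg_gradeSubmodule d) hle
  exact fun x hx => ⟨s, hsp, hs x hx⟩
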